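/- arXiv:1010.5278 — 7 statements merged into one kernel-verified Lean document; each statement's English description precedes it below -/
import Mathlib

section
/- For all positive integers N and w and every integer h ≥ 1, the sequence a_h = C(N-h, ⌊w/2⌋)·C(h-1, ⌈w/2⌉-1) is logarithmically concave in h, i.e., (a_h)² ≥ a_{h-1}·a_{h+1}. Moreover, if w = 1 then equality holds whenever a_{h-1} and a_{h+1} are both positive, while if w ≥ 2 the inequality is strict whenever a_{h-1} and a_{h+1} are both positive. -/
/-- Binomial coefficient on integers, with the convention that it is zero
when the lower index is negative or the upper index is negative. -/
def ichoose (n k : ℤ) : ℕ := if 0 ≤ n ∧ 0 ≤ k then n.toNat.choose k.toNat else 0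

/-- `aAcc N w h = C(N-h, ⌊w/2⌋)·C(h-1, ⌈w/2⌉-1)`, the input-output weight enumerator
of the length-`N` accumulator with input weight `w` and output weight `h`. -/
def aAcc (N w : ℕ) (h : ℤ) : ℕ :=
  ichoose ((N : ℤ) - h) ((w / 2 : ℕ) : ℤ) *
  ichoose (h - 1) ((((w + 1) / 2 : ℕ) : ℤ) - 1)

lemma ichoose_natCast (a b : ℕ) : ichoose (a : ℤ) (b : ℤ) = a.choose b := by
  simp [ichoose]

lemma ichoose_pos {n k : ℤ} (h : 0 < ichoose n k) : 0 ≤ k ∧ k ≤ n := by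
  unfold ichoose at h
  split at h
  · rename_i hc
    have hkn : ¬ (n.toNat < k.toNat) := by
      intro hlt
      rw [Nat.choose_eq_zero_of_lt hlt] at h
      exact absurd h (lt_irrefl 0)
    omega
  · simp at h

lemma nat_mul_pos {a b : ℕ} (h : 0 < a * b) : 0 < a ∧ 0 < b := by
  refine ⟨Nat.pos_of_ne_zero ?_, Nat.pos_of_ne_zero ?_⟩ <;> rintro rfl <;> simp at h

lemma aAcc_q (w : ℕ) (hw : 0 < w) (h : ℤ) (N : ℕ) :
    aAcc N w h = ichoose ((N : ℤ) - h) ((w / 2 : ℕ) : ℤ) *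
      ichoose (h - 1) (((w - 1) / 2 : ℕ) : ℤ) := by
  unfold aAcc
  congr 2
  omega

lemma reduce (N w : ℕ) (hw : 0 < w) (h : ℤ)
    (hp1 : 0 < aAcc N w (h - 1)) (hp2 : 0 < aAcc N w (h + 1)) :
    ∃ n m : ℕ, w / 2 ≤ n ∧ (w - 1) / 2 ≤ m ∧
      aAcc N w (h - 1) = (n + 2).choose (w / 2) * m.choose ((w - 1) / 2) ∧
      aAcc N w h = (n + 1).choose (w / 2) * (m + 1).choose ((w - 1) / 2) ∧
      aAcc N w (h + 1) = n.choose (w / 2) * (m + 2).choose ((w - 1) / 2) := by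
  rw [aAcc_q w hw _ N] at hp1 hp2
  obtain ⟨f1a, f1b⟩ := nat_mul_pos hp1
  obtain ⟨f2a, f2b⟩ := nat_mul_pos hp2
  obtain ⟨-, hb2⟩ := ichoose_pos f1a
  obtain ⟨hq1, hb1⟩ := ichoose_pos f1b
  obtain ⟨hp', hb3⟩ := ichoose_pos f2a
  obtain ⟨-, hb4⟩ := ichoose_pos f2b
  obtain ⟨n, hn⟩ : ∃ n : ℕ, (n : ℤ) = (N : ℤ) - h - 1 := ⟨_, Int.toNat_of_nonneg (by omega)⟩
  obtain ⟨m, hm⟩ : ∃ m : ℕ, (m : ℤ) = h - 2 := ⟨_, Int.toNat_of_nonneg (by omega)⟩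
  refine ⟨n, m, by omega, by omega, ?_, ?_, ?_⟩
  · rw [aAcc_q w hw _ N,
      show (N : ℤ) - (h - 1) = ((n + 2 : ℕ) : ℤ) by push_cast; omega,
      show h - 1 - 1 = ((m : ℕ) : ℤ) by omega,
      ichoose_natCast, ichoose_natCast]
  · rw [aAcc_q w hw _ N,
      show (N : ℤ) - h = ((n + 1 : ℕ) : ℤ) by push_cast; omega,
      show h - 1 = ((m + 1 : ℕ) : ℤ) by push_cast; omega,
      ichoose_natCast, ichoose_natCast]
  · rw [aAcc_q w hw _ N,
      show (N : ℤ) - (h + 1) = ((n : ℕ) : ℤ) by omega,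
      show h + 1 - 1 = ((m + 2 : ℕ) : ℤ) by push_cast; omega,
      ichoose_natCast, ichoose_natCast]

lemma choose_sq_le (n k : ℕ) :
    n.choose k * (n + 2).choose k ≤ ((n + 1).choose k) ^ 2 := by
  rcases le_or_gt k n with hk | hk
  · obtain ⟨s, rfl⟩ := Nat.exists_eq_add_of_le hk
    have h1 := Nat.choose_mul_succ_eq (k + s) k
    have h2 := Nat.choose_mul_succ_eq (k + s + 1) k
    have e1 : k + s + 1 - k = s + 1 := by omega
    have e2 : k + s + 1 + 1 - k = s + 2 := by omega
    rw [e1] at h1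
    rw [e2] at h2
    have key : (k + s).choose k * (k + s + 2).choose k * ((s + 1) * (k + s + 2)) ≤
        ((k + s + 1).choose k) ^ 2 * ((s + 1) * (k + s + 2)) := by
      have hrw : ((k + s + 1).choose k) ^ 2 * ((s + 1) * (k + s + 2)) =
          ((k + s + 1).choose k * (s + 1)) * ((k + s + 1).choose k * (k + s + 2)) := by ring
      rw [hrw, ← h1, h2]
      calc (k + s).choose k * (k + s + 2).choose k * ((s + 1) * (k + s + 2))
          ≤ (k + s).choose k * (k + s + 2).choose k * ((k + s + 1) * (s + 2)) := by
            apply Nat.mul_le_mul_left; nlinarith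
        _ = (k + s).choose k * (k + s + 1) * ((k + s + 2).choose k * (s + 2)) := by ring
    exact Nat.le_of_mul_le_mul_right key (by positivity)
  · simp [Nat.choose_eq_zero_of_lt hk]

lemma choose_sq_lt (n k : ℕ) (hk1 : 1 ≤ k) (hk : k ≤ n) :
    n.choose k * (n + 2).choose k < ((n + 1).choose k) ^ 2 := by
  obtain ⟨s, rfl⟩ := Nat.exists_eq_add_of_le hk
  have h1 := Nat.choose_mul_succ_eq (k + s) k
  have h2 := Nat.choose_mul_succ_eq (k + s + 1) k
  have e1 : k + s + 1 - k = s + 1 := by omega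
  have e2 : k + s + 1 + 1 - k = s + 2 := by omega
  rw [e1] at h1
  rw [e2] at h2
  have ha : 0 < (k + s).choose k := Nat.choose_pos (by omega)
  have hc : 0 < (k + s + 2).choose k := Nat.choose_pos (by omega)
  have key : (k + s).choose k * (k + s + 2).choose k * ((s + 1) * (k + s + 2)) <
      ((k + s + 1).choose k) ^ 2 * ((s + 1) * (k + s + 2)) := by
    have hrw : ((k + s + 1).choose k) ^ 2 * ((s + 1) * (k + s + 2)) =
        ((k + s + 1).choose k * (s + 1)) * ((k + s + 1).choose k * (k + s + 2)) := by ring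
    rw [hrw, ← h1, h2]
    calc (k + s).choose k * (k + s + 2).choose k * ((s + 1) * (k + s + 2))
        < (k + s).choose k * (k + s + 2).choose k * ((k + s + 1) * (s + 2)) := by
          apply Nat.mul_lt_mul_of_le_of_lt (le_refl _) (by nlinarith) (by positivity)
      _ = (k + s).choose k * (k + s + 1) * ((k + s + 2).choose k * (s + 2)) := by ring
  exact Nat.lt_of_mul_lt_mul_right key

theorem stmt_0 (N w : ℕ) (hN : 0 < N) (hw : 0 < w) (h : ℤ) (hh : 1 ≤ h) :
    aAcc N w (h - 1) * aAcc N w (h + 1) ≤ (aAcc N w h) ^ 2 ∧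
    (w = 1 → 0 < aAcc N w (h - 1) → 0 < aAcc N w (h + 1) →
      (aAcc N w h) ^ 2 = aAcc N w (h - 1) * aAcc N w (h + 1)) ∧
    (2 ≤ w → 0 < aAcc N w (h - 1) → 0 < aAcc N w (h + 1) →
      aAcc N w (h - 1) * aAcc N w (h + 1) < (aAcc N w h) ^ 2) := by
  refine ⟨?_, ?_, ?_⟩
  · by_cases h1 : 0 < aAcc N w (h - 1)
    · by_cases h2 : 0 < aAcc N w (h + 1)
      · obtain ⟨n, m, hpn, hqm, e1, e2, e3⟩ := reduce N w hw h h1 h2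
        rw [e1, e2, e3]
        calc (n + 2).choose (w / 2) * m.choose ((w - 1) / 2) *
              (n.choose (w / 2) * (m + 2).choose ((w - 1) / 2))
            = (n.choose (w / 2) * (n + 2).choose (w / 2)) *
              (m.choose ((w - 1) / 2) * (m + 2).choose ((w - 1) / 2)) := by ring
          _ ≤ ((n + 1).choose (w / 2)) ^ 2 * ((m + 1).choose ((w - 1) / 2)) ^ 2 :=
              Nat.mul_le_mul (choose_sq_le n (w / 2)) (choose_sq_le m ((w - 1) / 2))
          _ = ((n + 1).choose (w / 2) * (m + 1).choose ((w - 1) / 2)) ^ 2 := by ring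
      · have : aAcc N w (h + 1) = 0 := by omega
        simp [this]
    · have : aAcc N w (h - 1) = 0 := by omega
      simp [this]
  · intro hw1 h1 h2
    subst hw1
    obtain ⟨n, m, hpn, hqm, e1, e2, e3⟩ := reduce N 1 (by norm_num) h h1 h2
    norm_num at e1 e2 e3
    rw [e1, e2, e3]
    norm_num
  · intro hw2 h1 h2
    obtain ⟨n, m, hpn, hqm, e1, e2, e3⟩ := reduce N w hw h h1 h2
    rw [e1, e2, e3]
    have hp1 : 1 ≤ w / 2 := by omega
    have hbpos : 0 < m.choose ((w - 1) / 2) * (m + 2).choose ((w - 1) / 2) :=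
      Nat.mul_pos (Nat.choose_pos (by omega)) (Nat.choose_pos (by omega))
    have ha := choose_sq_lt n (w / 2) hp1 hpn
    have hb := choose_sq_le m ((w - 1) / 2)
    calc (n + 2).choose (w / 2) * m.choose ((w - 1) / 2) *
          (n.choose (w / 2) * (m + 2).choose ((w - 1) / 2))
        = (n.choose (w / 2) * (n + 2).choose (w / 2)) *
          (m.choose ((w - 1) / 2) * (m + 2).choose ((w - 1) / 2)) := by ring
      _ < ((n + 1).choose (w / 2)) ^ 2 * ((m + 1).choose ((w - 1) / 2)) ^ 2 := by
          have hbsq : 0 < ((m + 1).choose ((w - 1) / 2)) ^ 2 :=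
            pow_pos (Nat.choose_pos (by omega)) 2
          exact Nat.mul_lt_mul_of_lt_of_le ha hb hbsq
      _ = ((n + 1).choose (w / 2) * (m + 1).choose ((w - 1) / 2)) ^ 2 := by ring
end

section
/- For every real α with 0 < α < 1 and every real β with α/2 ≤ β ≤ 1 - α/2, it holds that f^Acc(α,β) ≤ 0, with equality if and only if β = 1/2. In particular, for fixed α the function β ↦ f^Acc(α,β) attains its maximum value 0 at β = 1/2. -/
/-- Binary entropy function with natural logarithm (`Real.log 0 = 0` gives `H 0 = H 1 = 0`). -/
noncomputable def H (x : ℝ) : ℝ := -x * Real.log x - (1 - x) * Real.log (1 - x)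

/-- Asymptotic input-output weight distribution of the rate-1 accumulator. -/
noncomputable def fAcc (α β : ℝ) : ℝ :=
  (1 - β) * H (α / (2 * (1 - β))) + β * H (α / (2 * β)) - H α

/-!
Write `c = α / 2` and `φ_c x = x log x - (x - c) log (x - c) - c log c` (`entropyPerspective`).
Each term `x * H (c / x)` of `fAcc` equals `φ_c x`, and `H α = 2 φ_c (1/2)`, so
`fAcc α β = φ_c (1 - β) + φ_c β - 2 φ_c (1/2)`. This is negative unless `β = 1 - β`,
because `φ_c` is strictly concave on `[c, ∞)`: its derivative `log x - log (x - c)` decreases.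
-/

open Real Set

noncomputable def entropyPerspective (c x : ℝ) : ℝ :=
  x * log x - (x - c) * log (x - c) - c * log c

lemma mul_log_div (x : ℝ) {y : ℝ} (hy : y ≠ 0) : x * log (x / y) = x * log x - x * log y := by
  rcases eq_or_ne x 0 with rfl | hx
  · simp
  · rw [log_div hx hy, mul_sub]

lemma mul_H_div_eq_entropyPerspective (c : ℝ) {x : ℝ} (hx : x ≠ 0) :
    x * H (c / x) = entropyPerspective c x := by
  have hsub : 1 - c / x = (x - c) / x := by field_simp
  have hc := mul_log_div c hx
  have hxc := mul_log_div (x - c) hx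
  rw [H, hsub]
  field_simp
  rw [entropyPerspective]
  linear_combination -hc - hxc

lemma H_eq_two_mul_entropyPerspective (α : ℝ) : H α = 2 * entropyPerspective (α / 2) (1 / 2) := by
  rw [← mul_H_div_eq_entropyPerspective _ (by norm_num : (1 / 2 : ℝ) ≠ 0)]
  ring_nf

lemma fAcc_eq_entropyPerspective (α : ℝ) {β : ℝ} (hβ0 : β ≠ 0) (hβ1 : 1 - β ≠ 0) :
    fAcc α β = entropyPerspective (α / 2) (1 - β) + entropyPerspective (α / 2) β
      - 2 * entropyPerspective (α / 2) (1 / 2) := by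
  rw [fAcc, ← div_div, ← div_div, mul_H_div_eq_entropyPerspective _ hβ1,
    mul_H_div_eq_entropyPerspective _ hβ0, H_eq_two_mul_entropyPerspective]

lemma hasDerivAt_entropyPerspective (c : ℝ) {x : ℝ} (hx : x ≠ 0) (hxc : x - c ≠ 0) :
    HasDerivAt (entropyPerspective c) (log x - log (x - c)) x := by
  have hlin : HasDerivAt (fun x : ℝ => (x - c) * log (x - c)) ((log (x - c) + 1) * 1) x := by
    exact (hasDerivAt_mul_log hxc).comp x ((hasDerivAt_id' x).sub_const c)
  exact (((hasDerivAt_mul_log hx).sub hlin).sub_const (c * log c)).congr_deriv (by ring)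

lemma strictConcaveOn_entropyPerspective {c : ℝ} (hc : 0 < c) :
    StrictConcaveOn ℝ (Ici c) (entropyPerspective c) := by
  have hcont : Continuous (entropyPerspective c) :=
    ((continuous_mul_log.sub (continuous_mul_log.comp (continuous_sub_right c))).sub
      continuous_const)
  refine StrictAntiOn.strictConcaveOn_of_deriv (convex_Ici c) hcont.continuousOn ?_
  rw [interior_Ici]
  intro x (hx : c < x) y (hy : c < y) hxy
  have hx0 : 0 < x := hc.trans hx
  have hy0 : 0 < y := hc.trans hy
  have hxc : 0 < x - c := sub_pos.mpr hx
  have hyc : 0 < y - c := sub_pos.mpr hy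
  rw [(hasDerivAt_entropyPerspective c hx0.ne' hxc.ne').deriv,
    (hasDerivAt_entropyPerspective c hy0.ne' hyc.ne').deriv]
  -- `log x - log (x - c) > log y - log (y - c)` is `y (x - c) < x (y - c)`, i.e. `c x < c y`.
  have hlog : log (y * (x - c)) < log (x * (y - c)) :=
    log_lt_log (by positivity) (by nlinarith)
  rw [log_mul hy0.ne' hxc.ne', log_mul hx0.ne' hyc.ne'] at hlog
  linarith

lemma fAcc_half (α : ℝ) : fAcc α (1 / 2) = 0 := by
  norm_num [fAcc]
  ring

lemma fAcc_neg {α β : ℝ} (hα0 : 0 < α) (hβl : α / 2 ≤ β) (hβu : β ≤ 1 - α / 2)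
    (hβ : β ≠ 1 / 2) : fAcc α β < 0 := by
  have hc : 0 < α / 2 := by linarith
  have hmid := (strictConcaveOn_entropyPerspective hc).2 (hβl : β ∈ Ici (α / 2))
    (show 1 - β ∈ Ici (α / 2) by simp only [mem_Ici]; linarith)
    (fun h => hβ (by linarith)) (by norm_num : (0 : ℝ) < 1 / 2) (by norm_num : (0 : ℝ) < 1 / 2)
    (by norm_num)
  simp only [smul_eq_mul, show (1 / 2 : ℝ) * β + 1 / 2 * (1 - β) = 1 / 2 by ring] at hmid
  rw [fAcc_eq_entropyPerspective α (by linarith) (by linarith)]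
  linarith

theorem stmt_1_general (α β : ℝ) (hα0 : 0 < α)
    (hβl : α / 2 ≤ β) (hβu : β ≤ 1 - α / 2) :
    fAcc α β ≤ 0 ∧ (fAcc α β = 0 ↔ β = 1 / 2) := by
  by_cases hβ : β = 1 / 2
  · subst hβ
    rw [fAcc_half]
    norm_num
  · have hneg := fAcc_neg hα0 hβl hβu hβ
    exact ⟨hneg.le, iff_of_false hneg.ne hβ⟩

theorem stmt_1 (α β : ℝ) (hα0 : 0 < α) (hα1 : α < 1)
    (hβl : α / 2 ≤ β) (hβu : β ≤ 1 - α / 2) :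
    fAcc α β ≤ 0 ∧ (fAcc α β = 0 ↔ β = 1 / 2) :=
  stmt_1_general α β hα0 hβl hβu
end

section
/- Let N and w be integers with 1 ≤ w ≤ N, and for even integers h set b_h = C(N-w, h/2)·C(w-1, h/2 - 1). Then for every even integer h ≥ 2, (b_h)² ≥ b_{h-2}·b_{h+2}, and the inequality is strict whenever b_{h-2} and b_{h+2} are both positive (equivalently, whenever 2 ≤ h/2, h/2 + 1 ≤ N - w + 1, and h/2 + 1 ≤ w). -/
/-- `bFF N w h = C(N-w, h/2)·C(w-1, h/2 - 1)`, the input-output weight enumerator of the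
terminated length-`N` 2-state feedforward encoder with input weight `w` and even output
weight `h`. -/
def bFF (N w : ℕ) (h : ℕ) : ℕ :=
  Nat.choose (N - w) (h / 2) * ichoose ((w : ℤ) - 1) (((h / 2 : ℕ) : ℤ) - 1)

lemma choose_lc (n j : ℕ) :
    n.choose j * n.choose (j+2) ≤ n.choose (j+1) ^ 2 ∧
    (0 < n.choose j * n.choose (j+2) → n.choose j * n.choose (j+2) < n.choose (j+1) ^ 2) := by
  rcases le_or_gt (j+2) n with hn | hn
  · obtain ⟨d, rfl⟩ : ∃ d, n = j + 2 + d := ⟨n - (j+2), by omega⟩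
    have h1 := Nat.choose_succ_right_eq (j+2+d) (j+1)
    have h2 := Nat.choose_succ_right_eq (j+2+d) j
    have e1 : j+2+d - (j+1) = d+1 := by omega
    have e2 : j+2+d - j = d+2 := by omega
    rw [e1] at h1; rw [e2] at h2
    set a := (j+2+d).choose j with ha
    set b := (j+2+d).choose (j+1) with hb
    set c := (j+2+d).choose (j+2) with hc
    have key : a * c * ((j+2)*(d+2)) = b^2 * ((j+1)*(d+1)) := by
      calc a * c * ((j+2)*(d+2)) = (c*(j+2)) * (a*(d+2)) := by ring
        _ = (b*(d+1)) * (b*(j+1)) := by rw [h1, h2]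
        _ = b^2 * ((j+1)*(d+1)) := by ring
    have hA : 0 < (j+2)*(d+2) := by positivity
    have hBA : (j+1)*(d+1) < (j+2)*(d+2) := by nlinarith
    constructor
    · apply Nat.le_of_mul_le_mul_right _ hA
      calc a*c*((j+2)*(d+2)) = b^2 * ((j+1)*(d+1)) := key
        _ ≤ b^2 * ((j+2)*(d+2)) := Nat.mul_le_mul_left _ (le_of_lt hBA)
    · intro _
      have hbpos : 0 < b := Nat.choose_pos (by omega)
      have h3 : a*c*((j+2)*(d+2)) < b^2*((j+2)*(d+2)) := by
        rw [key]
        exact mul_lt_mul_of_pos_left hBA (by positivity)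
      exact lt_of_mul_lt_mul_right h3 (Nat.zero_le _)
  · have hz : n.choose (j+2) = 0 := Nat.choose_eq_zero_of_lt hn
    simp [hz]

lemma bFF_eq (N w k : ℕ) (hw : 1 ≤ w) (hk : 1 ≤ k) :
    bFF N w (2*k) = (N-w).choose k * (w-1).choose (k-1) := by
  have h2 : 2*k/2 = k := by omega
  unfold bFF ichoose
  rw [h2]
  have e1 : ((k:ℤ) - 1) = ((k-1 : ℕ) : ℤ) := by omega
  have e2 : ((w:ℤ) - 1) = ((w-1 : ℕ) : ℤ) := by omega
  rw [e1, e2]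
  simp

lemma bFF_zero (N w : ℕ) : bFF N w 0 = 0 := by
  unfold bFF ichoose
  norm_num

theorem stmt_2 (N w : ℕ) (hw : 1 ≤ w) (hwN : w ≤ N) (h : ℕ) (hhe : Even h) (hh2 : 2 ≤ h) :
    bFF N w (h - 2) * bFF N w (h + 2) ≤ (bFF N w h) ^ 2 ∧
    (0 < bFF N w (h - 2) → 0 < bFF N w (h + 2) →
      bFF N w (h - 2) * bFF N w (h + 2) < (bFF N w h) ^ 2) := by
  obtain ⟨k, rfl⟩ := hhe
  have hk1 : 1 ≤ k := by omega
  rcases Nat.lt_or_ge k 2 with hk2 | hk2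
  · have hke : k = 1 := by omega
    subst hke
    have : (1 + 1 - 2 : ℕ) = 0 := rfl
    rw [this, bFF_zero]
    simp
  · have e0 : k + k - 2 = 2*(k-1) := by omega
    have e2 : k + k + 2 = 2*(k+1) := by omega
    have em : k + k = 2*k := by omega
    rw [e0, e2, em, bFF_eq N w (k-1) hw (by omega), bFF_eq N w (k+1) hw (by omega),
        bFF_eq N w k hw hk1]
    obtain ⟨i, rfl⟩ : ∃ i, k = i + 2 := ⟨k-2, by omega⟩
    have f1 : i + 2 - 1 = i + 1 := rfl
    have f2 : i + 1 - 1 = i := rfl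
    have f3 : i + 2 + 1 = i + 1 + 2 := rfl
    have f4 : i + 2 + 1 - 1 = i + 2 := rfl
    rw [f1, f2, f3, f4]
    obtain ⟨L1, S1⟩ := choose_lc (N-w) (i+1)
    obtain ⟨L2, S2⟩ := choose_lc (w-1) i
    constructor
    · calc (N-w).choose (i+1) * (w-1).choose i * ((N-w).choose (i+1+2) * (w-1).choose (i+2))
          = ((N-w).choose (i+1) * (N-w).choose (i+1+2)) * ((w-1).choose i * (w-1).choose (i+2)) := by
            ring
        _ ≤ (N-w).choose (i+1+1) ^ 2 * (w-1).choose (i+1) ^ 2 := Nat.mul_le_mul L1 L2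
        _ = ((N-w).choose (i+2) * (w-1).choose (i+1)) ^ 2 := by ring
    · intro hp1 hp2
      have a1 : 0 < (N-w).choose (i+1) := Nat.pos_of_ne_zero (fun hz => by simp [hz] at hp1)
      have a2 : 0 < (w-1).choose i := Nat.pos_of_ne_zero (fun hz => by simp [hz] at hp1)
      have a3 : 0 < (N-w).choose (i+1+2) := Nat.pos_of_ne_zero (fun hz => by simp [hz] at hp2)
      have a4 : 0 < (w-1).choose (i+2) := Nat.pos_of_ne_zero (fun hz => by simp [hz] at hp2)
      have s1 := S1 (Nat.mul_pos a1 a3)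
      have s2 := S2 (Nat.mul_pos a2 a4)
      calc (N-w).choose (i+1) * (w-1).choose i * ((N-w).choose (i+1+2) * (w-1).choose (i+2))
          = ((N-w).choose (i+1) * (N-w).choose (i+1+2)) * ((w-1).choose i * (w-1).choose (i+2)) := by
            ring
        _ < (N-w).choose (i+1+1) ^ 2 * (w-1).choose (i+1) ^ 2 :=
            mul_lt_mul'' s1 s2 (Nat.zero_le _) (Nat.zero_le _)
        _ = ((N-w).choose (i+2) * (w-1).choose (i+1)) ^ 2 := by ring
end

section
/- For every real λ with 0 < λ < 1 and reals β, β' with 0 ≤ β' ≤ 1, 0 ≤ β ≤ 1, and 0 ≤ (β - λβ')/(1-λ) ≤ 1, it holds that f^P(β,β',λ) ≤ 0, with equality if and only if β' = β. In particular, f^P(β,β,λ) = 0 for all 0 ≤ β ≤ 1. -/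
/-- Asymptotic input-output weight distribution of random puncturing with survival rate `lam`. -/
noncomputable def fP (β β' lam : ℝ) : ℝ :=
  H β' + ((1 - lam) / lam) * H ((β - lam * β') / (1 - lam)) - (1 / lam) * H β

theorem StrictConcaveOn.smul_add_smul_eq_map_iff {𝕜 E β : Type*} [Semiring 𝕜] [PartialOrder 𝕜]
    [AddCommMonoid E] [AddCommMonoid β] [PartialOrder β] [Module 𝕜 E] [Module 𝕜 β]
    {s : Set E} {f : E → β} (hf : StrictConcaveOn 𝕜 s f) {x y : E} (hx : x ∈ s) (hy : y ∈ s)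
    {a b : 𝕜} (ha : 0 < a) (hb : 0 < b) (hab : a + b = 1) :
    a • f x + b • f y = f (a • x + b • y) ↔ x = y := by
  refine ⟨fun h => ?_, ?_⟩
  · by_contra hxy
    exact (hf.2 hx hy hxy ha hb hab).ne h
  · rintro rfl
    rw [← add_smul, ← add_smul, hab, one_smul, one_smul]

lemma H_eq_binEntropy : H = Real.binEntropy := by
  funext x
  simp only [H, Real.binEntropy, Real.log_inv]
  ring

lemma strictConcaveOn_H : StrictConcaveOn ℝ (Set.Icc 0 1) H :=
  H_eq_binEntropy ▸ Real.strictConcave_binEntropy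

section Puncturing

variable {lam : ℝ} (β β' : ℝ)

lemma mul_add_mul_div_one_sub_eq (hl1 : lam ≠ 1) :
    lam * β' + (1 - lam) * ((β - lam * β') / (1 - lam)) = β := by
  field_simp [sub_ne_zero.2 hl1.symm]
  ring

lemma eq_div_one_sub_iff (hl1 : lam ≠ 1) :
    β' = (β - lam * β') / (1 - lam) ↔ β' = β := by
  rw [eq_div_iff (sub_ne_zero.2 hl1.symm)]
  constructor <;> intro h <;> linarith

lemma fP_eq_div (hl0 : lam ≠ 0) :
    fP β β' lam = (lam * H β' + (1 - lam) * H ((β - lam * β') / (1 - lam)) - H β) / lam := by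
  simp only [fP]
  field_simp

lemma fP_self (hl0 : lam ≠ 0) (hl1 : lam ≠ 1) : fP β β lam = 0 := by
  have hγ : (β - lam * β) / (1 - lam) = β := by
    field_simp [sub_ne_zero.2 hl1.symm]
  rw [fP_eq_div β β hl0, hγ]
  ring

end Puncturing

theorem stmt_5 (lam : ℝ) (hl0 : 0 < lam) (hl1 : lam < 1) :
    (∀ β β' : ℝ, 0 ≤ β' → β' ≤ 1 → 0 ≤ β → β ≤ 1 →
      0 ≤ (β - lam * β') / (1 - lam) → (β - lam * β') / (1 - lam) ≤ 1 →
      fP β β' lam ≤ 0 ∧ (fP β β' lam = 0 ↔ β' = β)) ∧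
    (∀ β : ℝ, 0 ≤ β → β ≤ 1 → fP β β lam = 0) := by
  refine ⟨fun β β' hb'0 hb'1 _ _ hγ0 hγ1 => ?_, fun β _ _ => fP_self β hl0.ne' hl1.ne⟩
  have h1l : 0 < 1 - lam := sub_pos.2 hl1
  have hmix := mul_add_mul_div_one_sub_eq β β' hl1.ne
  have hle := strictConcaveOn_H.concaveOn.2 ⟨hb'0, hb'1⟩ ⟨hγ0, hγ1⟩ hl0.le h1l.le (by ring)
  have heq := strictConcaveOn_H.smul_add_smul_eq_map_iff ⟨hb'0, hb'1⟩ ⟨hγ0, hγ1⟩ hl0 h1l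
    (by ring)
  simp only [smul_eq_mul, hmix, eq_div_one_sub_iff β β' hl1.ne] at hle heq
  rw [fP_eq_div β β' hl0.ne', div_eq_zero_iff, sub_eq_zero, heq]
  exact ⟨div_nonpos_of_nonpos_of_nonneg (by linarith) hl0.le, by simp [hl0.ne']⟩
end

section
/- For all reals α, β with 0 < α < 1 and α/2 < β < 1 - α/2, the limit as N → ∞ of (1/N)·ln( C(N - ⌊βN⌋, ⌊⌊αN⌋/2⌋)·C(⌊βN⌋ - 1, ⌈⌊αN⌋/2⌉ - 1) / C(N, ⌊αN⌋) ) exists and equals f^Acc(α,β) = (1-β)·H(α/(2(1-β))) + β·H(α/(2β)) - H(α). -/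
open Filter

namespace StmtSixAux

noncomputable def eps (n : ℕ) : ℝ := Real.log n.factorial - ((n:ℝ) * Real.log n - n)

lemma eps_eq (n : ℕ) (hn : 1 ≤ n) :
    eps n = Real.log (Stirling.stirlingSeq n) + 1/2 * Real.log (2*n) := by
  have h := Stirling.log_stirlingSeq_formula n
  have hne : (n:ℝ) ≠ 0 := by exact_mod_cast (Nat.pos_of_ne_zero (by omega)).ne'
  rw [Real.log_div hne (Real.exp_ne_zero 1), Real.log_exp] at h
  unfold eps
  linarith [h]

lemma eps_tendsto (n : ℕ → ℕ) (r : ℝ) (hr : 0 < r)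
    (h : Tendsto (fun N => (n N : ℝ) / N) atTop (nhds r)) :
    Tendsto (fun N => eps (n N) / N) atTop (nhds 0) := by
  have hev : ∀ᶠ N : ℕ in atTop, r/2 * N ≤ (n N : ℝ) ∧ (n N : ℝ) ≤ (r+1) * N ∧ 1 ≤ n N := by
    have h1 : ∀ᶠ N : ℕ in atTop, (n N : ℝ)/N ∈ Set.Ioo (r/2) (r+1) :=
      h (Ioo_mem_nhds (by linarith) (by linarith))
    filter_upwards [h1, eventually_ge_atTop 1] with N hN hN1
    have hNpos : (0:ℝ) < N := by exact_mod_cast hN1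
    obtain ⟨hl, hu⟩ := hN
    have hl' : r/2 * N ≤ (n N : ℝ) := by
      rw [lt_div_iff₀ hNpos] at hl; linarith
    have hu' : (n N : ℝ) ≤ (r+1) * N := by
      rw [div_lt_iff₀ hNpos] at hu; linarith
    refine ⟨hl', hu', ?_⟩
    by_contra hc
    have h0 : n N = 0 := by omega
    rw [h0] at hl'
    simp only [Nat.cast_zero] at hl'
    nlinarith
  have hn_top : Tendsto (fun N => n N) atTop atTop := by
    rw [tendsto_atTop]
    intro b
    filter_upwards [hev, eventually_ge_atTop (⌈(2*b)/r⌉₊ + 1)] with N hN hb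
    obtain ⟨hl, _, _⟩ := hN
    have h2 : (⌈(2*(b:ℝ))/r⌉₊ : ℝ) ≤ N := by exact_mod_cast (by omega : ⌈(2*(b:ℝ))/r⌉₊ ≤ N)
    have h1 : (2*(b:ℝ))/r ≤ ⌈(2*(b:ℝ))/r⌉₊ := Nat.le_ceil _
    have : (b:ℝ) ≤ r/2 * N := by
      rw [div_le_iff₀ hr] at h1
      nlinarith
    exact_mod_cast this.trans hl
  have hst : Tendsto (fun N => Real.log (Stirling.stirlingSeq (n N))) atTop
      (nhds (Real.log (Real.sqrt Real.pi))) :=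
    ((Real.continuousAt_log (by positivity : Real.sqrt Real.pi ≠ 0)).tendsto.comp
      Stirling.tendsto_stirlingSeq_sqrt_pi).comp hn_top
  have hinv : Tendsto (fun N : ℕ => (N:ℝ)⁻¹) atTop (nhds 0) :=
    tendsto_inv_atTop_zero.comp tendsto_natCast_atTop_atTop
  have h1 : Tendsto (fun N => Real.log (Stirling.stirlingSeq (n N)) / N) atTop (nhds 0) := by
    have := hst.mul hinv
    simpa [div_eq_mul_inv] using this
  have hg : Tendsto (fun N : ℕ => Real.log (2*(r+1)*(N:ℝ)) / N) atTop (nhds 0) := by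
    have ha : Tendsto (fun N : ℕ => Real.log (2*(r+1)) / N) atTop (nhds 0) := by
      have := hinv.const_mul (Real.log (2*(r+1)))
      simpa [div_eq_mul_inv] using this
    have hb : Tendsto (fun N : ℕ => Real.log (N:ℝ) / N) atTop (nhds 0) :=
      Real.isLittleO_log_id_atTop.tendsto_div_nhds_zero.comp tendsto_natCast_atTop_atTop
    have := ha.add hb
    rw [add_zero] at this
    apply this.congr'
    filter_upwards [eventually_ge_atTop 1] with N hN1
    have hNne : (N:ℝ) ≠ 0 := Nat.cast_ne_zero.mpr (by omega)
    rw [Real.log_mul (by positivity) hNne, add_div]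
  have h2 : Tendsto (fun N => Real.log (2 * (n N : ℝ)) / N) atTop (nhds 0) := by
    apply squeeze_zero' (g := fun N : ℕ => Real.log (2*(r+1)*(N:ℝ)) / N)
    · filter_upwards [hev, eventually_ge_atTop 1] with N hN hN1
      obtain ⟨hl, _, hn1⟩ := hN
      have hNpos : (0:ℝ) < N := by exact_mod_cast hN1
      have hgen : (1:ℝ) ≤ n N := by exact_mod_cast hn1
      have : 0 ≤ Real.log (2 * (n N:ℝ)) := Real.log_nonneg (by linarith)
      positivity
    · filter_upwards [hev, eventually_ge_atTop 1] with N hN hN1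
      obtain ⟨_, hu, hn1⟩ := hN
      have hNpos : (0:ℝ) < N := by exact_mod_cast hN1
      have hgen : (1:ℝ) ≤ n N := by exact_mod_cast hn1
      have hlog : Real.log (2*(n N:ℝ)) ≤ Real.log (2*(r+1)*(N:ℝ)) :=
        Real.log_le_log (by linarith) (by nlinarith)
      exact div_le_div_of_nonneg_right hlog hNpos.le |>.trans_eq rfl
    · exact hg
  have := h1.add (h2.const_mul (1/2 : ℝ))
  have hz : (0:ℝ) + 1/2 * 0 = 0 := by ring
  rw [hz] at this
  apply this.congr'
  filter_upwards [hev] with N hN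
  obtain ⟨_, _, hn1⟩ := hN
  rw [eps_eq _ hn1]
  ring

lemma Hval (p q : ℝ) (hq : 0 < q) (hqp : q < p) :
    p * H (q/p) = p * Real.log p - q * Real.log q - (p-q) * Real.log (p-q) := by
  have hp : 0 < p := hq.trans hqp
  unfold H
  have h1 : Real.log (q/p) = Real.log q - Real.log p := Real.log_div hq.ne' hp.ne'
  have h2 : 1 - q/p = (p-q)/p := by field_simp
  have h3 : Real.log ((p-q)/p) = Real.log (p-q) - Real.log p := Real.log_div (by linarith) hp.ne'
  rw [h1, h2, h3]
  field_simp
  ring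

lemma log_fact (n : ℕ) : Real.log n.factorial = eps n + (n:ℝ) * Real.log n - n := by
  unfold eps; ring

lemma log_choose_eq (a b : ℕ) (N : ℕ) (hb1 : 1 ≤ b) (hba : b + 1 ≤ a) (hN : 1 ≤ N) :
    (1/(N:ℝ)) * Real.log (Nat.choose a b) =
      ((a:ℝ)/N) * Real.log ((a:ℝ)/N) - ((b:ℝ)/N) * Real.log ((b:ℝ)/N)
        - (((a-b : ℕ):ℝ)/N) * Real.log (((a-b : ℕ):ℝ)/N)
      + (eps a - eps b - eps (a-b)) / N := by
  set c := a - b with hc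
  have hcb : (b:ℝ) + c = a := by exact_mod_cast (by omega : b + c = a)
  have hNpos : (0:ℝ) < N := by exact_mod_cast hN
  have hbpos : (0:ℝ) < b := by exact_mod_cast hb1
  have hapos : (0:ℝ) < a := by exact_mod_cast (by omega : 0 < a)
  have hcpos : (0:ℝ) < c := by exact_mod_cast (by omega : 0 < c)
  have e1 : Real.log (Nat.choose a b : ℝ) =
      Real.log a.factorial - Real.log b.factorial - Real.log c.factorial := by
    rw [Nat.cast_choose ℝ (by omega : b ≤ a), Real.log_div (by positivity) (by positivity),
      Real.log_mul (by positivity) (by positivity)]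
    ring
  have la : Real.log (a:ℝ) = Real.log ((a:ℝ)/N) + Real.log N := by
    rw [Real.log_div hapos.ne' hNpos.ne']; ring
  have lb : Real.log (b:ℝ) = Real.log ((b:ℝ)/N) + Real.log N := by
    rw [Real.log_div hbpos.ne' hNpos.ne']; ring
  have lc : Real.log (c:ℝ) = Real.log ((c:ℝ)/N) + Real.log N := by
    rw [Real.log_div hcpos.ne' hNpos.ne']; ring
  rw [e1, log_fact a, log_fact b, log_fact c, la, lb, lc]
  field_simp
  linear_combination (1 - Real.log N) * hcb

/-- Main asymptotic lemma for a single binomial coefficient. -/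
lemma key (a b : ℕ → ℕ) (p q : ℝ) (hq : 0 < q) (hqp : q < p)
    (ha : Tendsto (fun N => (a N : ℝ)/N) atTop (nhds p))
    (hb : Tendsto (fun N => (b N : ℝ)/N) atTop (nhds q)) :
    Tendsto (fun N : ℕ => (1/(N:ℝ)) * Real.log (Nat.choose (a N) (b N))) atTop
      (nhds (p * H (q/p))) := by
  have hp : 0 < p := hq.trans hqp
  set m : ℝ := (q + p)/2 with hm
  have hev : ∀ᶠ N : ℕ in atTop, 1 ≤ b N ∧ b N + 1 ≤ a N ∧ 1 ≤ N := by
    have h1 : ∀ᶠ N : ℕ in atTop, (b N : ℝ)/N ∈ Set.Ioo (q/2) m :=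
      hb (Ioo_mem_nhds (by linarith) (by rw [hm]; linarith))
    have h2 : ∀ᶠ N : ℕ in atTop, (a N : ℝ)/N ∈ Set.Ioo m (p+1) :=
      ha (Ioo_mem_nhds (by rw [hm]; linarith) (by linarith))
    filter_upwards [h1, h2, eventually_ge_atTop 1] with N hbN haN hN1
    have hNpos : (0:ℝ) < N := by exact_mod_cast hN1
    have hb1 : 1 ≤ b N := by
      by_contra hcon
      have h0 : b N = 0 := by omega
      rw [h0] at hbN
      simp only [Nat.cast_zero, zero_div] at hbN
      have := hbN.1
      linarith
    have hba : b N + 1 ≤ a N := by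
      have : (b N : ℝ) < (a N : ℝ) := by
        have := hbN.2
        have := haN.1
        have hlt : (b N : ℝ)/N < (a N:ℝ)/N := by linarith
        exact (div_lt_div_iff_of_pos_right hNpos).mp hlt
      have : b N < a N := by exact_mod_cast this
      omega
    exact ⟨hb1, hba, hN1⟩
  have hc : Tendsto (fun N => ((a N - b N : ℕ):ℝ)/N) atTop (nhds (p - q)) := by
    apply (ha.sub hb).congr'
    filter_upwards [hev] with N hN
    obtain ⟨hb1, hba, _⟩ := hN
    rw [Nat.cast_sub (by omega)]
    ring
  have flog : ∀ (s : ℕ → ℕ) (r : ℝ), 0 < r → Tendsto (fun N => (s N:ℝ)/N) atTop (nhds r) →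
      Tendsto (fun N => ((s N:ℝ)/N) * Real.log ((s N:ℝ)/N)) atTop (nhds (r * Real.log r)) := by
    intro s r hr hs
    exact hs.mul (((Real.continuousAt_log hr.ne').tendsto).comp hs)
  have hfa := flog a p hp ha
  have hfb := flog b q hq hb
  have hfc := flog (fun N => a N - b N) (p - q) (by linarith) hc
  have hea := eps_tendsto a p hp ha
  have heb := eps_tendsto b q hq hb
  have hec := eps_tendsto (fun N => a N - b N) (p - q) (by linarith) hc
  have heps : Tendsto (fun N => (eps (a N) - eps (b N) - eps (a N - b N)) / N) atTop (nhds 0) := by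
    have := (hea.sub heb).sub hec
    have hz : (0:ℝ) - 0 - 0 = 0 := by ring
    rw [hz] at this
    apply this.congr
    intro N
    ring
  have htot := ((hfa.sub hfb).sub hfc).add heps
  rw [add_zero] at htot
  rw [Hval p q hq hqp]
  apply htot.congr'
  filter_upwards [hev] with N hN
  obtain ⟨hb1, hba, hN1⟩ := hN
  exact (log_choose_eq (a N) (b N) N hb1 hba hN1).symm

/-- Ratio convergence from an absolute bound. -/
lemma ratio_tendsto (n : ℕ → ℕ) (r C : ℝ)
    (h : ∀ᶠ N : ℕ in atTop, |(n N:ℝ) - r * N| ≤ C) :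
    Tendsto (fun N => (n N:ℝ)/N) atTop (nhds r) := by
  have hinv : Tendsto (fun N : ℕ => (N:ℝ)⁻¹) atTop (nhds 0) :=
    tendsto_inv_atTop_zero.comp tendsto_natCast_atTop_atTop
  have hlo : Tendsto (fun N : ℕ => r - C * (N:ℝ)⁻¹) atTop (nhds r) := by
    have := (hinv.const_mul C)
    have h2 := (tendsto_const_nhds (x := r) (f := atTop (α := ℕ))).sub this
    simpa using h2
  have hhi : Tendsto (fun N : ℕ => r + C * (N:ℝ)⁻¹) atTop (nhds r) := by
    have := (hinv.const_mul C)
    have h2 := (tendsto_const_nhds (x := r) (f := atTop (α := ℕ))).add this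
    simpa using h2
  apply tendsto_of_tendsto_of_tendsto_of_le_of_le' hlo hhi
  · filter_upwards [h, eventually_ge_atTop 1] with N hN hN1
    have hNpos : (0:ℝ) < N := by exact_mod_cast hN1
    rw [abs_le] at hN
    have hge : r * N - C ≤ (n N : ℝ) := by linarith [hN.1]
    calc r - C * (N:ℝ)⁻¹ = (r * N - C)/N := by field_simp
    _ ≤ (n N : ℝ)/N := div_le_div_of_nonneg_right hge hNpos.le
  · filter_upwards [h, eventually_ge_atTop 1] with N hN hN1
    have hNpos : (0:ℝ) < N := by exact_mod_cast hN1
    rw [abs_le] at hN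
    have : (n N : ℝ) ≤ r * N + C := by linarith [hN.2]
    calc (n N : ℝ)/N ≤ (r * N + C)/N := div_le_div_of_nonneg_right this hNpos.le
    _ = r + C * (N:ℝ)⁻¹ := by field_simp

end StmtSixAux

open StmtSixAux in
theorem stmt_6 (α β : ℝ) (hα0 : 0 < α) (hα1 : α < 1)
    (hβl : α / 2 < β) (hβu : β < 1 - α / 2) :
    Tendsto (fun N : ℕ =>
      (1 / (N : ℝ)) * Real.log (
        ((Nat.choose (N - ⌊β * (N : ℝ)⌋₊) (⌊α * (N : ℝ)⌋₊ / 2) *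
          Nat.choose (⌊β * (N : ℝ)⌋₊ - 1) ((⌊α * (N : ℝ)⌋₊ + 1) / 2 - 1) : ℕ) : ℝ) /
        ((Nat.choose N ⌊α * (N : ℝ)⌋₊ : ℕ) : ℝ)))
      atTop (nhds (fAcc α β)) := by
  have hβ0 : 0 < β := lt_trans (by linarith) hβl
  have hβ1 : β < 1 := by linarith
  -- the index sequences
  set a1 : ℕ → ℕ := fun N => N - ⌊β * (N:ℝ)⌋₊ with ha1def
  set b1 : ℕ → ℕ := fun N => ⌊α * (N:ℝ)⌋₊ / 2 with hb1def
  set a2 : ℕ → ℕ := fun N => ⌊β * (N:ℝ)⌋₊ - 1 with ha2def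
  set b2 : ℕ → ℕ := fun N => (⌊α * (N:ℝ)⌋₊ + 1) / 2 - 1 with hb2def
  set b3 : ℕ → ℕ := fun N => ⌊α * (N:ℝ)⌋₊ with hb3def
  -- basic eventual floor facts
  have hbig : ∀ᶠ N : ℕ in atTop, 2 ≤ α * N ∧ 2 ≤ β * N ∧ 1 ≤ N := by
    filter_upwards [eventually_ge_atTop (⌈2/α⌉₊ + ⌈2/β⌉₊ + 1)] with N hN
    have hN1 : 1 ≤ N := by omega
    have hNα : (⌈2/α⌉₊ : ℝ) ≤ N := by exact_mod_cast (by omega : ⌈2/α⌉₊ ≤ N)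
    have hNβ : (⌈2/β⌉₊ : ℝ) ≤ N := by exact_mod_cast (by omega : ⌈2/β⌉₊ ≤ N)
    have h1 : 2/α ≤ (N:ℝ) := le_trans (Nat.le_ceil _) hNα
    have h2 : 2/β ≤ (N:ℝ) := le_trans (Nat.le_ceil _) hNβ
    rw [div_le_iff₀ hα0] at h1
    rw [div_le_iff₀ hβ0] at h2
    exact ⟨by linarith, by linarith, hN1⟩
  have floorfacts : ∀ᶠ N : ℕ in atTop,
      ((⌊α * (N:ℝ)⌋₊ : ℝ) ≤ α * N ∧ α * N - 1 < (⌊α * (N:ℝ)⌋₊ : ℝ)) ∧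
      ((⌊β * (N:ℝ)⌋₊ : ℝ) ≤ β * N ∧ β * N - 1 < (⌊β * (N:ℝ)⌋₊ : ℝ)) := by
    filter_upwards [hbig] with N hN
    have h1 : 0 ≤ α * (N:ℝ) := by linarith [hN.1]
    have h2 : 0 ≤ β * (N:ℝ) := by linarith [hN.2.1]
    exact ⟨⟨Nat.floor_le h1, Nat.sub_one_lt_floor _⟩, ⟨Nat.floor_le h2, Nat.sub_one_lt_floor _⟩⟩
  -- ratio convergences
  have hb3 : Tendsto (fun N => (b3 N : ℝ)/N) atTop (nhds α) := by
    apply ratio_tendsto _ _ 1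
    filter_upwards [floorfacts] with N hN
    rw [abs_le]
    constructor <;> [skip; skip] <;> simp only [hb3def] <;> push_cast <;>
      [linarith [hN.1.2]; linarith [hN.1.1]]
  have hb1 : Tendsto (fun N => (b1 N : ℝ)/N) atTop (nhds (α/2)) := by
    apply ratio_tendsto _ _ 2
    filter_upwards [floorfacts] with N hN
    have hdm := Nat.div_add_mod (⌊α * (N:ℝ)⌋₊) 2
    have hmod : ⌊α * (N:ℝ)⌋₊ % 2 ≤ 1 := by omega
    have h1 : 2 * ((⌊α * (N:ℝ)⌋₊ / 2 : ℕ) : ℝ) + ((⌊α * (N:ℝ)⌋₊ % 2 : ℕ) : ℝ)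
        = (⌊α * (N:ℝ)⌋₊ : ℝ) := by exact_mod_cast hdm
    have hmod' : ((⌊α * (N:ℝ)⌋₊ % 2 : ℕ) : ℝ) ≤ 1 := by exact_mod_cast hmod
    have hmodnn : (0:ℝ) ≤ ((⌊α * (N:ℝ)⌋₊ % 2 : ℕ) : ℝ) := by positivity
    rw [abs_le]
    simp only [hb1def]
    constructor <;> push_cast <;> [linarith [hN.1.2]; linarith [hN.1.1]]
  have hb2 : Tendsto (fun N => (b2 N : ℝ)/N) atTop (nhds (α/2)) := by
    apply ratio_tendsto _ _ 3
    filter_upwards [floorfacts, hbig] with N hN hNb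
    have hm1 : 1 ≤ ⌊α * (N:ℝ)⌋₊ := by
      have : (1:ℝ) ≤ (⌊α * (N:ℝ)⌋₊ : ℝ) := by linarith [hN.1.2, hNb.1]
      exact_mod_cast this
    have hdm := Nat.div_add_mod (⌊α * (N:ℝ)⌋₊ + 1) 2
    have hmod : (⌊α * (N:ℝ)⌋₊ + 1) % 2 ≤ 1 := by omega
    have hd1 : 1 ≤ (⌊α * (N:ℝ)⌋₊ + 1) / 2 := by omega
    have hcast : ((b2 N : ℕ) : ℝ) = ((⌊α * (N:ℝ)⌋₊ + 1) / 2 : ℕ) - 1 := by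
      simp only [hb2def]
      rw [Nat.cast_sub hd1]
      push_cast
      ring
    have h1 : 2 * (((⌊α * (N:ℝ)⌋₊ + 1) / 2 : ℕ) : ℝ) + (((⌊α * (N:ℝ)⌋₊ + 1) % 2 : ℕ) : ℝ)
        = (⌊α * (N:ℝ)⌋₊ : ℝ) + 1 := by exact_mod_cast hdm
    have hmod' : (((⌊α * (N:ℝ)⌋₊ + 1) % 2 : ℕ) : ℝ) ≤ 1 := by exact_mod_cast hmod
    have hmodnn : (0:ℝ) ≤ (((⌊α * (N:ℝ)⌋₊ + 1) % 2 : ℕ) : ℝ) := by positivity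
    rw [abs_le, hcast]
    constructor <;> [linarith [hN.1.2]; linarith [hN.1.1]]
  have ha1 : Tendsto (fun N => (a1 N : ℝ)/N) atTop (nhds (1 - β)) := by
    apply ratio_tendsto _ _ 1
    filter_upwards [floorfacts, hbig] with N hN hNb
    have hkN : ⌊β * (N:ℝ)⌋₊ ≤ N := by
      have : (⌊β * (N:ℝ)⌋₊ : ℝ) ≤ N := by nlinarith [hN.2.1, hNb.2.2,
        (by exact_mod_cast hNb.2.2 : (1:ℝ) ≤ N)]
      exact_mod_cast this
    have hcast : ((a1 N : ℕ) : ℝ) = (N:ℝ) - ⌊β * (N:ℝ)⌋₊ := by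
      simp only [ha1def]
      rw [Nat.cast_sub hkN]
    rw [abs_le, hcast]
    constructor <;> [linarith [hN.2.1]; linarith [hN.2.2]]
  have ha2 : Tendsto (fun N => (a2 N : ℝ)/N) atTop (nhds β) := by
    apply ratio_tendsto _ _ 2
    filter_upwards [floorfacts, hbig] with N hN hNb
    have hk1 : 1 ≤ ⌊β * (N:ℝ)⌋₊ := by
      have : (1:ℝ) ≤ (⌊β * (N:ℝ)⌋₊ : ℝ) := by linarith [hN.2.2, hNb.2.1]
      exact_mod_cast this
    have hcast : ((a2 N : ℕ) : ℝ) = (⌊β * (N:ℝ)⌋₊ : ℝ) - 1 := by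
      simp only [ha2def]
      rw [Nat.cast_sub hk1]
      push_cast
      ring
    rw [abs_le, hcast]
    constructor <;> [linarith [hN.2.2]; linarith [hN.2.1]]
  have haN : Tendsto (fun N : ℕ => ((N:ℕ) : ℝ)/N) atTop (nhds 1) := by
    apply ratio_tendsto _ _ 0
    filter_upwards [eventually_ge_atTop 1] with N hN
    simp
  -- three key limits
  have K1 := key a1 b1 (1 - β) (α/2) (by linarith) (by linarith) ha1 hb1
  have K2 := key a2 b2 β (α/2) (by linarith) hβl ha2 hb2
  have K3 := key (fun N => N) b3 1 α hα0 hα1 haN hb3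
  -- eventual positivity of the binomials
  have evle : ∀ (x y : ℕ → ℕ) (s t : ℝ), s < t →
      Tendsto (fun N => (x N:ℝ)/N) atTop (nhds s) →
      Tendsto (fun N => (y N:ℝ)/N) atTop (nhds t) →
      ∀ᶠ N : ℕ in atTop, x N ≤ y N := by
    intro x y s t hst hx hy
    have h1 := hx (Iio_mem_nhds (show s < (s+t)/2 by linarith))
    have h2 := hy (Ioi_mem_nhds (show (s+t)/2 < t by linarith))
    filter_upwards [h1, h2, eventually_ge_atTop 1] with N hxN hyN hN1
    have hNpos : (0:ℝ) < N := by exact_mod_cast hN1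
    have : (x N : ℝ)/N < (y N : ℝ)/N := lt_trans hxN hyN
    have : (x N : ℝ) < (y N : ℝ) := (div_lt_div_iff_of_pos_right hNpos).mp this
    exact_mod_cast this.le
  have hpos1 := evle b1 a1 (α/2) (1-β) (by linarith) hb1 ha1
  have hpos2 := evle b2 a2 (α/2) β hβl hb2 ha2
  have hpos3 := evle b3 (fun N => N) α 1 hα1 hb3 haN
  -- combine
  have htot := (K1.add K2).sub K3
  have hval : (1 - β) * H (α/2/(1-β)) + β * H (α/2/β) - 1 * H (α/1) = fAcc α β := by
    rw [div_div, div_div, div_one, one_mul]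
    unfold fAcc
    ring
  rw [hval] at htot
  apply htot.congr'
  filter_upwards [hpos1, hpos2, hpos3] with N h1 h2 h3
  have hc1 : 0 < Nat.choose (a1 N) (b1 N) := Nat.choose_pos h1
  have hc2 : 0 < Nat.choose (a2 N) (b2 N) := Nat.choose_pos h2
  have hc3 : 0 < Nat.choose N (b3 N) := Nat.choose_pos h3
  have hc1' : ((Nat.choose (a1 N) (b1 N) : ℕ) : ℝ) ≠ 0 := by positivity
  have hc2' : ((Nat.choose (a2 N) (b2 N) : ℕ) : ℝ) ≠ 0 := by
    exact_mod_cast hc2.ne'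
  have hc3' : ((Nat.choose N (b3 N) : ℕ) : ℝ) ≠ 0 := by
    exact_mod_cast hc3.ne'
  have hc1'' : ((Nat.choose (a1 N) (b1 N) : ℕ) : ℝ) ≠ 0 := by
    exact_mod_cast hc1.ne'
  show _ = _
  push_cast
  rw [Real.log_div (by positivity) hc3', Real.log_mul hc1'' hc2']
  ring
end

section
/- For every real ρ_s with 0 < ρ_s < 1/2, the function α ↦ f^Acc(α, ρ_s), restricted to α ≥ 0, has right derivative at α = 0 equal to (1/2)·ln(4·ρ_s·(1-ρ_s)), and this value is strictly negative. Consequently d/dα f^Acc(α,ρ_s)|_{α=0} ≤ -C for the positive constant C = -(1/2)·ln(4·ρ_s·(1-ρ_s)). -/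
open Real

lemma hasDerivAt_sub_mul_log_one_sub_div {c : ℝ} (hc : c ≠ 0) :
    HasDerivAt (fun x => (c - x) * log (1 - x / c)) (-1) 0 := by
  have hlin : HasDerivAt (fun x => 1 - x / c) (-(1 / c)) 0 := by
    simpa using ((hasDerivAt_id (0 : ℝ)).div_const c).const_sub 1
  refine (((hasDerivAt_id (0 : ℝ)).const_sub c).fun_mul (hlin.log (by simp))).congr_deriv ?_
  simp [hc]

lemma mul_H_div_two_mul {c α : ℝ} (hc : 0 < c) (hα : 0 ≤ α) :
    c * H (α / (2 * c)) =
      -(α / 2) * log α + α / 2 * log (2 * c) - (c - α / 2) * log (1 - α / 2 / c) := by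
  rcases hα.eq_or_lt with rfl | hα
  · simp [H]
  · rw [H, log_div hα.ne' (by positivity), div_div]
    field_simp
    ring

lemma fAcc_eq {α ρ : ℝ} (hρ₀ : 0 < ρ) (hρ₁ : ρ < 1) (hα : 0 ≤ α) :
    fAcc α ρ = α / 2 * log (4 * ρ * (1 - ρ)) - (1 - ρ - α / 2) * log (1 - α / 2 / (1 - ρ))
      - (ρ - α / 2) * log (1 - α / 2 / ρ) + (1 - α) * log (1 - α) := by
  have hlog : log (4 * ρ * (1 - ρ)) = log (2 * (1 - ρ)) + log (2 * ρ) := by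
    rw [← log_mul (by linarith) (by positivity)]
    ring_nf
  rw [fAcc, mul_H_div_two_mul (by linarith) hα, mul_H_div_two_mul hρ₀ hα, H, hlog]
  ring

lemma log_four_mul_mul_one_sub_neg {ρ : ℝ} (hρ₀ : 0 < ρ) (hρ₁ : ρ < 1) (hρ : ρ ≠ 1 / 2) :
    log (4 * ρ * (1 - ρ)) < 0 := by
  have hsq : 0 < (1 - 2 * ρ) ^ 2 := by
    have : 1 - 2 * ρ ≠ 0 := by contrapose! hρ; linarith
    positivity
  exact log_neg (by nlinarith) (by nlinarith)

theorem stmt_16 (ρs : ℝ) (h0 : 0 < ρs) (h1 : ρs < 1 / 2) :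
    HasDerivWithinAt (fun α => fAcc α ρs)
      ((1 / 2) * Real.log (4 * ρs * (1 - ρs))) (Set.Ici 0) 0 ∧
    (1 / 2) * Real.log (4 * ρs * (1 - ρs)) < 0 := by
  set L := log (4 * ρs * (1 - ρs))
  have hhalf : HasDerivAt (fun α : ℝ => α / 2) (1 / 2) 0 := by
    simpa using (hasDerivAt_id (0 : ℝ)).div_const 2
  have hsmooth (c : ℝ) (hc : c ≠ 0) :
      HasDerivAt (fun α : ℝ => (c - α / 2) * log (1 - α / 2 / c)) (-1 * (1 / 2)) 0 := by
    exact (hasDerivAt_sub_mul_log_one_sub_div hc).comp_of_eq 0 hhalf (by simp)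
  have hlast : HasDerivAt (fun α : ℝ => (1 - α) * log (1 - α)) (-1) 0 := by
    simpa using hasDerivAt_sub_mul_log_one_sub_div one_ne_zero
  have hderiv := (((hhalf.mul_const L).sub (hsmooth (1 - ρs) (by linarith))).sub
    (hsmooth ρs h0.ne')).add hlast
  refine ⟨?_, 
    mul_neg_of_pos_of_neg one_half_pos (log_four_mul_mul_one_sub_neg h0 (by linarith) h1.ne)⟩
  refine (hderiv.hasDerivWithinAt.congr_of_mem ?_ Set.self_mem_Ici).congr_deriv (by ring)
  intro α hα
  exact fAcc_eq h0 (by linarith) hα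
end

section
/- Let N and w be positive integers and let a_h = C(N-h, ⌊w/2⌋)·C(h-1, ⌈w/2⌉-1) for integers h. Then for all integers i ≤ m ≤ m' ≤ j with i + j = m + m', it holds that a_i·a_j ≤ a_m·a_{m'}. In particular, a product of J values a_{h_1}·a_{h_2}·…·a_{h_J} with fixed total sum h_1 + … + h_J is maximized when the weights h_i are as equal as possible. -/
/-- Moving two arguments one step towards each other does not decrease the product; for
sequences with no internal zeros this is log-concavity. -/
def LogConcaveSeq (f : ℤ → ℕ) : Prop :=
  ∀ x y, x < y → f x * f y ≤ f (x + 1) * f (y - 1)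

namespace LogConcaveSeq

variable {f g : ℤ → ℕ}

theorem mul (hf : LogConcaveSeq f) (hg : LogConcaveSeq g) :
    LogConcaveSeq fun x => f x * g x := by
  intro x y hxy
  calc f x * g x * (f y * g y) = f x * f y * (g x * g y) := by ring
    _ ≤ f (x + 1) * f (y - 1) * (g (x + 1) * g (y - 1)) :=
        Nat.mul_le_mul (hf x y hxy) (hg x y hxy)
    _ = f (x + 1) * g (x + 1) * (f (y - 1) * g (y - 1)) := by ring

theorem comp_sub_left (hf : LogConcaveSeq f) (c : ℤ) : LogConcaveSeq fun x => f (c - x) := by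
  intro x y hxy
  have h := hf (c - y) (c - x) (by omega)
  rw [show c - y + 1 = c - (y - 1) by ring, show c - x - 1 = c - (x + 1) by ring] at h
  linarith

theorem comp_sub_right (hf : LogConcaveSeq f) (c : ℤ) : LogConcaveSeq fun x => f (x - c) := by
  intro x y hxy
  have h := hf (x - c) (y - c) (by omega)
  rwa [show x - c + 1 = x + 1 - c by ring, show y - c - 1 = y - 1 - c by ring] at h

theorem mul_sub_add_le (hf : LogConcaveSeq f) {m m' : ℤ} (hmm' : m ≤ m') (k : ℕ) :
    f (m - k) * f (m' + k) ≤ f m * f m' := by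
  induction k with
  | zero => simp
  | succ k ih =>
    have h := hf (m - (k + 1 : ℕ)) (m' + (k + 1 : ℕ)) (by omega)
    rw [show m - ((k + 1 : ℕ) : ℤ) + 1 = m - k by push_cast; ring,
      show m' + ((k + 1 : ℕ) : ℤ) - 1 = m' + k by push_cast; ring] at h
    exact h.trans ih

theorem mul_le_mul {i m m' j : ℤ} (hf : LogConcaveSeq f) (him : i ≤ m) (hmm' : m ≤ m')
    (hsum : i + j = m + m') : f i * f j ≤ f m * f m' := by
  have h := hf.mul_sub_add_le hmm' (m - i).toNat
  rwa [show m - ((m - i).toNat : ℤ) = i by omega,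
    show m' + ((m - i).toNat : ℤ) = j by omega] at h

end LogConcaveSeq

theorem Nat.choose_mul_choose_succ_le {a b : ℕ} (k : ℕ) (hab : a ≤ b) :
    a.choose k * (b + 1).choose k ≤ (a + 1).choose k * b.choose k := by
  rcases lt_or_ge a k with hak | hka
  · simp [Nat.choose_eq_zero_of_lt hak]
  obtain ⟨c, rfl⟩ := Nat.exists_eq_add_of_le hka
  obtain ⟨d, rfl⟩ : ∃ d, b = k + d := Nat.exists_eq_add_of_le (hka.trans hab)
  have ha := Nat.choose_mul_succ_eq (k + c) k
  have hb := Nat.choose_mul_succ_eq (k + d) k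
  rw [show k + c + 1 - k = c + 1 by omega] at ha
  rw [show k + d + 1 - k = d + 1 by omega] at hb
  refine Nat.le_of_mul_le_mul_right ?_ (show 0 < (c + 1) * (d + 1) by positivity)
  calc (k + c).choose k * (k + d + 1).choose k * ((c + 1) * (d + 1))
      = (k + c).choose k * ((k + d + 1).choose k * (d + 1)) * (c + 1) := by ring
    _ = (k + c).choose k * (k + d).choose k * ((c + 1) * (k + d + 1)) := by rw [← hb]; ring
    _ ≤ (k + c).choose k * (k + d).choose k * ((k + c + 1) * (d + 1)) :=
        Nat.mul_le_mul_left _ (by nlinarith)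
    _ = ((k + c).choose k * (k + c + 1)) * (k + d).choose k * (d + 1) := by ring
    _ = (k + c + 1).choose k * (k + d).choose k * ((c + 1) * (d + 1)) := by rw [ha]; ring

theorem ichoose_natCast_s17 (n k : ℕ) : ichoose n k = n.choose k := by
  simp [ichoose]

theorem logConcaveSeq_ichoose (k : ℤ) : LogConcaveSeq fun n => ichoose n k := by
  intro x y hxy
  by_cases h : 0 ≤ x ∧ 0 ≤ k
  swap
  · simp [ichoose, h]
  obtain ⟨a, rfl⟩ := Int.eq_ofNat_of_zero_le h.1
  obtain ⟨b, hb⟩ := Int.eq_ofNat_of_zero_le (show 0 ≤ y - 1 by omega)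
  obtain ⟨k, rfl⟩ := Int.eq_ofNat_of_zero_le h.2
  rw [hb, show y = ((b + 1 : ℕ) : ℤ) by omega,
    show (a : ℤ) + 1 = ((a + 1 : ℕ) : ℤ) by push_cast; rfl]
  simp only [ichoose_natCast_s17]
  exact Nat.choose_mul_choose_succ_le k (by omega)

theorem logConcaveSeq_aAcc (N w : ℕ) : LogConcaveSeq (aAcc N w) :=
  ((logConcaveSeq_ichoose _).comp_sub_left _).mul ((logConcaveSeq_ichoose _).comp_sub_right 1)

theorem stmt_17_general (N w : ℕ)
    (i m m' j : ℤ) (him : i ≤ m) (hmm' : m ≤ m')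
    (hsum : i + j = m + m') :
    aAcc N w i * aAcc N w j ≤ aAcc N w m * aAcc N w m' :=
  (logConcaveSeq_aAcc N w).mul_le_mul him hmm' hsum

theorem stmt_17 (N w : ℕ) (hN : 0 < N) (hw : 0 < w)
    (i m m' j : ℤ) (him : i ≤ m) (hmm' : m ≤ m') (hm'j : m' ≤ j)
    (hsum : i + j = m + m') :
    aAcc N w i * aAcc N w j ≤ aAcc N w m * aAcc N w m' :=
  stmt_17_general N w i m m' j him hmm' hsum
end
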